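/- For every pair of distinct natural numbers i ≠ j, the boundaried graphs G^i and G^j, where G^n is the complete bipartite graph K_{2,n} with boundary B = {x,y} being the side of size 2, are not gluing-equivalent with respect to the s-Multiway Cut problem (allowing glued terminals on the boundary): specifically, letting H be the edgeless graph on B, the minimum vertex multiway cut separating x from y in G^n ⊕ H equals n, while the minimum multiway cut for the empty terminal set is 0; hence no constant offset Δ makes optimum values agree for all gluings. -/

import Mathlib

variable {V : Type*}

/-- Delete a vertex set `X` from `G`. -/
def SimpleGraph.del (G : SimpleGraph V) (X : Set V) : SimpleGraph V where
  Adj u v := G.Adj u v ∧ u ∉ X ∧ v ∉ X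
  symm := ⟨fun u v h => ⟨h.1.symm, h.2.2, h.2.1⟩⟩
  loopless := ⟨fun v h => G.irrefl h.1⟩

/-- A multiway cut for terminal set `T`: a vertex set `S` disjoint from `T` such that no
two distinct terminals are connected in `G − S`. -/
def IsMWC (G : SimpleGraph V) (T S : Set V) : Prop :=
  S ∩ T = ∅ ∧ ∀ t₁ ∈ T, ∀ t₂ ∈ T, t₁ ≠ t₂ → ¬ (G.del S).Reachable t₁ t₂

/-- Minimum size of a multiway cut for `(G, T)`. -/
noncomputable def mwcOpt (G : SimpleGraph V) (T : Set V) : ℕ :=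
  sInf {n | ∃ S : Finset V, IsMWC G T ↑S ∧ S.card = n}

/-- The complete bipartite graph `K_{2,n}` with parts `{x, y} = {inr true, inr false}`
and `{v_1, …, v_n} = {inl k | k < n}`. -/
def K2n (n : ℕ) : SimpleGraph (ℕ ⊕ Bool) where
  Adj u v := (∃ k < n, ∃ b : Bool, u = Sum.inl k ∧ v = Sum.inr b) ∨
    (∃ k < n, ∃ b : Bool, v = Sum.inl k ∧ u = Sum.inr b)
  symm := ⟨fun u v h => h.symm⟩
  loopless := by
    constructor
    intro v h
    rcases h with ⟨k, _, b, h1, h2⟩ | ⟨k, _, b, h1, h2⟩ <;> simp_all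

/-- The vertices `x` and `y` forming the size-2 side. -/
def xB : ℕ ⊕ Bool := Sum.inr true
def yB : ℕ ⊕ Bool := Sum.inr false

lemma reach_eq_of_no_adj {G : SimpleGraph V} (h : ∀ u v, ¬ G.Adj u v) {a b : V}
    (hr : G.Reachable a b) : a = b := by
  obtain ⟨w⟩ := hr
  cases w with
  | nil => rfl
  | cons h' p => exact absurd h' (h _ _)

lemma K2n_sup_bot (n : ℕ) : K2n n ⊔ (⊥ : SimpleGraph (ℕ ⊕ Bool)) = K2n n := by
  simp

lemma xB_ne_yB : xB ≠ yB := by simp [xB, yB]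

lemma mwcOpt_K2n (n : ℕ) : mwcOpt (K2n n) {xB, yB} = n := by
  set S : Finset (ℕ ⊕ Bool) := (Finset.range n).image Sum.inl with hS
  have hmemS : ∀ u : ℕ ⊕ Bool, u ∈ S ↔ ∃ k < n, Sum.inl k = u := by
    intro u; simp [hS]
  have hcard : S.card = n := by
    rw [hS, Finset.card_image_of_injective _ Sum.inl_injective, Finset.card_range]
  have hmwc : IsMWC (K2n n) {xB, yB} ↑S := by
    constructor
    · ext u
      simp only [Set.mem_inter_iff, Set.mem_empty_iff_false, iff_false, not_and]
      intro hu
      rcases (hmemS u).1 hu with ⟨k, _, hk⟩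
      subst hk
      simp [xB, yB]
    · intro t₁ _ t₂ _ hne hr
      exact hne (reach_eq_of_no_adj (fun u v hadj => by
        rcases hadj with ⟨hadj, hu, hv⟩
        rcases hadj with ⟨k, hk, b, rfl, rfl⟩ | ⟨k, hk, b, rfl, rfl⟩
        · exact hu ((hmemS _).2 ⟨k, hk, rfl⟩)
        · exact hv ((hmemS _).2 ⟨k, hk, rfl⟩)) hr)
  have hmem : n ∈ {m | ∃ S : Finset (ℕ ⊕ Bool), IsMWC (K2n n) {xB, yB} ↑S ∧ S.card = m} :=
    ⟨S, hmwc, hcard⟩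
  refine le_antisymm (Nat.sInf_le hmem) (le_csInf ⟨n, hmem⟩ ?_)
  rintro m ⟨S', hmwc', rfl⟩
  have hxB : xB ∉ (S' : Set (ℕ ⊕ Bool)) := by
    intro hx
    have := hmwc'.1
    rw [Set.eq_empty_iff_forall_notMem] at this
    exact this xB ⟨hx, Or.inl rfl⟩
  have hyB : yB ∉ (S' : Set (ℕ ⊕ Bool)) := by
    intro hy
    have := hmwc'.1
    rw [Set.eq_empty_iff_forall_notMem] at this
    exact this yB ⟨hy, Or.inr rfl⟩
  have hsub : S ⊆ S' := by
    intro u hu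
    rcases (hmemS u).1 hu with ⟨k, hk, rfl⟩
    by_contra hkS
    apply hmwc'.2 xB (Or.inl rfl) yB (Or.inr rfl) xB_ne_yB
    have h1 : ((K2n n).del ↑S').Adj xB (Sum.inl k) :=
      ⟨Or.inr ⟨k, hk, true, rfl, rfl⟩, hxB, hkS⟩
    have h2 : ((K2n n).del ↑S').Adj (Sum.inl k) yB :=
      ⟨Or.inl ⟨k, hk, false, rfl, rfl⟩, hkS, hyB⟩
    exact h1.reachable.trans h2.reachable
  calc n = S.card := hcard.symm
    _ ≤ S'.card := Finset.card_le_card hsub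

lemma mwcOpt_empty (G : SimpleGraph V) : mwcOpt G (∅ : Set V) = 0 := by
  apply Nat.sInf_eq_zero.mpr
  left
  exact ⟨∅, ⟨by simp, fun t ht => absurd ht (Set.notMem_empty t)⟩, Finset.card_empty⟩

/-- the boundaried graphs `K_{2,i}` and `K_{2,j}` (boundary `{x,y}`) are not
gluing equivalent for s-Multiway Cut when glued terminals may lie on the boundary:
gluing the edgeless graph `H` on `B = {x,y}`, the multiway-cut optimum for terminals
`{x,y}` in `K_{2,n} ⊕ H` is `n` while for the empty terminal set it is `0`; hence no
constant offset `Δ` makes the optima agree for all gluings. -/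
theorem K2n_not_gluing_equivalent :
    (∀ n : ℕ, mwcOpt (K2n n ⊔ (⊥ : SimpleGraph (ℕ ⊕ Bool))) {xB, yB} = n) ∧
    (∀ n : ℕ, mwcOpt (K2n n ⊔ (⊥ : SimpleGraph (ℕ ⊕ Bool))) (∅ : Set (ℕ ⊕ Bool)) = 0) ∧
    (∀ i j : ℕ, i ≠ j →
      ¬ ∃ Δ : ℤ, ∀ T : Set (ℕ ⊕ Bool), T ⊆ {xB, yB} →
        (mwcOpt (K2n i ⊔ (⊥ : SimpleGraph (ℕ ⊕ Bool))) T : ℤ) =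
          (mwcOpt (K2n j ⊔ (⊥ : SimpleGraph (ℕ ⊕ Bool))) T : ℤ) + Δ) := by
  
  refine ⟨fun n => ?_, fun n => ?_, fun i j hij ⟨Δ, h⟩ => ?_⟩
  · rw [K2n_sup_bot]; exact mwcOpt_K2n n
  · rw [K2n_sup_bot]; exact mwcOpt_empty _
  · have h1 := h {xB, yB} subset_rfl
    have h2 := h ∅ (Set.empty_subset _)
    rw [K2n_sup_bot, K2n_sup_bot, mwcOpt_K2n, mwcOpt_K2n] at h1
    rw [K2n_sup_bot, K2n_sup_bot, mwcOpt_empty, mwcOpt_empty] at h2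
    omega
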